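/- Any 4×4 matrix U which is a product of a list of matrices, each entry being X₀, X₁, a power of T₀ or T₁, CX₀₁, or CX₁₀, in which exactly three entries are CX₀₁ or CX₁₀, is phase-equivalent either to a matrix of the form X₀^k · X₁^{k'} · T₀^l · T₁^{l'} · CX₀₁ · CX₁₀ · T₁^{l''} · CX₀₁ with k, k' ∈ {0,1}, l, l' ∈ {0,…,m−1}, l'' ∈ {0,…,m/d−1}, or to a product with at most one CX gate. Moreover, the number of phase-equivalence classes of matrices of the displayed form equals 4m³/d. -/

import Mathlib

/-
Every gate either permutes the computational basis (X₀, X₁, CX₀₁, CX₁₀) or is diagonal (powers of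
T₀, T₁). The diagonal matrices D(a,b,c) = diag(1, ω^b, ω^a, ω^(a+b+2c)) are normalized by the CX
gates and, up to a phase, by X₀ and X₁; the CX gates normalize the group generated by X₀ and X₁.
Pushing the gates of a circuit through one another therefore brings its matrix, up to phase, to
the form X₀^k X₁^k' D(a,b,c) P_σ, where P_σ is the matrix of a permutation σ of the basis fixing
|00⟩ whose sign is the parity of the number of CX gates. With three CX gates σ is a transposition:
for CX₀₁ and CX₁₀ one CX gate suffices, and for the swap one gets the displayed form, in which
c only matters through 2c, i.e. modulo m/d. Reading off the first column, and then the diagonal,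
shows that distinct parameters give distinct phase classes.
-/

open Matrix Kronecker

noncomputable section

/-- ω = exp(2πi/m). -/
def omega (m : ℕ) : ℂ := Complex.exp (2 * Real.pi * Complex.I / m)

/-- The bit-flip gate X = !![0,1;1,0]. -/
def Xg : Matrix (Fin 2) (Fin 2) ℂ := !![0, 1; 1, 0]

/-- The phase gate T = !![1,0;0,ω]. -/
def Tg (m : ℕ) : Matrix (Fin 2) (Fin 2) ℂ := !![1, 0; 0, omega m]

/-- The inverse phase gate T⁻¹ = !![1,0;0,ω⁻¹]. -/
def Tginv (m : ℕ) : Matrix (Fin 2) (Fin 2) ℂ := !![1, 0; 0, (omega m)⁻¹]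

/-- The Kronecker product of two 2×2 matrices, as a 4×4 matrix. -/
def kron (A B : Matrix (Fin 2) (Fin 2) ℂ) : Matrix (Fin 4) (Fin 4) ℂ :=
  Matrix.reindex finProdFinEquiv finProdFinEquiv (A ⊗ₖ B)

/-- The controlled-X gate with control qubit 0 and target qubit 1. -/
def CX01 : Matrix (Fin 4) (Fin 4) ℂ :=
  !![1, 0, 0, 0; 0, 1, 0, 0; 0, 0, 0, 1; 0, 0, 1, 0]

/-- The controlled-X gate with control qubit 1 and target qubit 0. -/
def CX10 : Matrix (Fin 4) (Fin 4) ℂ :=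
  !![1, 0, 0, 0; 0, 0, 0, 1; 0, 0, 1, 0; 0, 1, 0, 0]

/-- The controlled-S gate, the diagonal matrix with entries (1,1,1,ω²). -/
def CSg (m : ℕ) : Matrix (Fin 4) (Fin 4) ℂ :=
  Matrix.diagonal ![1, 1, 1, (omega m) ^ 2]

/-- The inverse controlled-S gate, the diagonal matrix with entries (1,1,1,ω⁻²). -/
def CSginv (m : ℕ) : Matrix (Fin 4) (Fin 4) ℂ :=
  Matrix.diagonal ![1, 1, 1, ((omega m) ^ 2)⁻¹]
/-- X₀ = X ⊗ 1. -/
def X0 : Matrix (Fin 4) (Fin 4) ℂ := kron Xg 1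

/-- X₁ = 1 ⊗ X. -/
def X1 : Matrix (Fin 4) (Fin 4) ℂ := kron 1 Xg

/-- T₀ = T ⊗ 1. -/
def T0 (m : ℕ) : Matrix (Fin 4) (Fin 4) ℂ := kron (Tg m) 1

/-- T₁ = 1 ⊗ T. -/
def T1 (m : ℕ) : Matrix (Fin 4) (Fin 4) ℂ := kron 1 (Tg m)

/-- Two matrices are phase-equivalent if they differ by a nonzero scalar. -/
def PhaseEq {α : Type*} (U V : Matrix α α ℂ) : Prop := ∃ c : ℂ, c ≠ 0 ∧ U = c • V

/-- A gate of a two-qubit CX-circuit: X₀, X₁, a power of T₀ or T₁, CX₀₁, or CX₁₀. -/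
inductive Gate2X where
  | X0 | X1
  | T0pow (l : ℕ)
  | T1pow (l : ℕ)
  | CX01 | CX10

/-- The matrix of a gate. -/
def Gate2X.toMatrix (m : ℕ) : Gate2X → Matrix (Fin 4) (Fin 4) ℂ
  | .X0 => _root_.X0
  | .X1 => _root_.X1
  | .T0pow l => T0 m ^ l
  | .T1pow l => T1 m ^ l
  | .CX01 => _root_.CX01
  | .CX10 => _root_.CX10

/-- Whether a gate is a CX gate. -/
def Gate2X.isCX : Gate2X → Bool
  | .CX01 => true
  | .CX10 => true
  | _ => false

/-- The set of 4×4 matrices implementable by a circuit with exactly r CX gates. -/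
def F2set (m r : ℕ) : Set (Matrix (Fin 4) (Fin 4) ℂ) :=
  {U | ∃ L : List Gate2X, (L.map (Gate2X.toMatrix m)).prod = U ∧
    L.countP (fun g => g.isCX) = r}

/-- The set of matrices of the displayed form
X₀^k·X₁^k'·T₀^l·T₁^l'·CX₀₁·CX₁₀·T₁^l''·CX₀₁. -/
def TripleCXForms (m : ℕ) : Set (Matrix (Fin 4) (Fin 4) ℂ) :=
  {V | ∃ k k' l l' l'' : ℕ, k < 2 ∧ k' < 2 ∧ l < m ∧ l' < m ∧ l'' < m / Nat.gcd m 2 ∧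
    V = X0 ^ k * X1 ^ k' * T0 m ^ l * T1 m ^ l' * CX01 * CX10 * T1 m ^ l'' * CX01}

open Equiv

lemma omega_ne_zero (m : ℕ) : omega m ≠ 0 := Complex.exp_ne_zero _

lemma isPrimitiveRoot_omega {m : ℕ} (hm : 0 < m) : IsPrimitiveRoot (omega m) m :=
  Complex.isPrimitiveRoot_exp m hm.ne'

lemma omega_zpow_eq_zpow_iff {m : ℕ} (hm : 0 < m) {x y : ℤ} :
    omega m ^ x = omega m ^ y ↔ x ≡ y [ZMOD m] := by
  rw [Int.modEq_iff_dvd, ← (isPrimitiveRoot_omega hm).zpow_eq_one_iff_dvd,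
    zpow_sub₀ (omega_ne_zero m), div_eq_one_iff_eq (zpow_ne_zero _ (omega_ne_zero m)), eq_comm]

lemma Int.exists_natCast_lt_modEq {n : ℕ} (hn : 0 < n) (a : ℤ) :
    ∃ r : ℕ, r < n ∧ (r : ℤ) ≡ a [ZMOD n] := by
  have : NeZero n := ⟨hn.ne'⟩
  exact ⟨(a : ZMod n).val, ZMod.val_lt _, by rw [ZMod.val_intCast]; exact Int.mod_modEq a n⟩

lemma Int.mul_modEq_mul_iff_modEq_div_gcd {m c : ℕ} (hm : 0 < m) {x y : ℤ} :
    c * x ≡ c * y [ZMOD m] ↔ x ≡ y [ZMOD (m / Nat.gcd m c : ℕ)] := by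
  constructor
  · intro h
    simpa [Int.natCast_div] using Int.ModEq.cancel_left_div_gcd (by exact_mod_cast hm) h
  · intro h
    refine (h.mul_left' (c := c)).of_dvd ?_
    rw [← Int.natCast_mul, Int.natCast_dvd_natCast, mul_comm c]
    conv_lhs => rw [← Nat.div_mul_cancel (Nat.gcd_dvd_left m c)]
    exact Nat.mul_dvd_mul_left _ (Nat.gcd_dvd_right m c)

namespace PhaseEq

variable {α : Type*} {U V W : Matrix α α ℂ}

lemma refl (U : Matrix α α ℂ) : PhaseEq U U := ⟨1, one_ne_zero, (one_smul _ _).symm⟩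

lemma of_eq (h : U = V) : PhaseEq U V := h ▸ refl U

lemma symm (h : PhaseEq U V) : PhaseEq V U := by
  obtain ⟨c, hc, rfl⟩ := h
  exact ⟨c⁻¹, inv_ne_zero hc, by rw [smul_smul, inv_mul_cancel₀ hc, one_smul]⟩

lemma trans (h₁ : PhaseEq U V) (h₂ : PhaseEq V W) : PhaseEq U W := by
  obtain ⟨c, hc, rfl⟩ := h₁
  obtain ⟨d, hd, rfl⟩ := h₂
  exact ⟨c * d, mul_ne_zero hc hd, smul_smul c d W⟩

lemma equivalence : Equivalence (PhaseEq (α := α)) := ⟨refl, symm, trans⟩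

lemma smul_left {c : ℂ} (hc : c ≠ 0) (U : Matrix α α ℂ) : PhaseEq (c • U) U := ⟨c, hc, rfl⟩

variable [Fintype α]

lemma mul_left (A : Matrix α α ℂ) (h : PhaseEq U V) : PhaseEq (A * U) (A * V) := by
  obtain ⟨c, hc, rfl⟩ := h
  exact ⟨c, hc, Matrix.mul_smul A c V⟩

lemma mul_right (A : Matrix α α ℂ) (h : PhaseEq U V) : PhaseEq (U * A) (V * A) := by
  obtain ⟨c, hc, rfl⟩ := h
  exact ⟨c, hc, Matrix.smul_mul c V A⟩

end PhaseEq

lemma diagonal_mul_permMatrix {n R : Type*} [DecidableEq n] [Fintype n] [Semiring R]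
    (d : n → R) (σ : Perm n) :
    diagonal d * σ.permMatrix R = σ.permMatrix R * diagonal (d ∘ σ.symm) := by
  ext i j
  rw [mul_diagonal, diagonal_mul]
  by_cases h : σ i = j
  · subst h
    simp [PEquiv.toMatrix_apply]
  · simp [PEquiv.toMatrix_apply, h]

lemma isUnit_permMatrix {n R : Type*} [DecidableEq n] [Fintype n] [Semiring R] (σ : Perm n) :
    IsUnit (σ.permMatrix R) := by
  simpa using (Group.isUnit σ⁻¹).map (permMatrixHom (n := n) (R := R))

/-- `D(a,b,c) = T₀^a T₁^b (CSg m)^c`. -/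
def phaseDiag (m : ℕ) (a b c : ℤ) : Matrix (Fin 4) (Fin 4) ℂ :=
  diagonal ![1, omega m ^ b, omega m ^ a, omega m ^ (a + b + 2 * c)]

section phaseDiag

variable {m : ℕ}

lemma phaseDiag_eq_phaseDiag_iff (hm : 0 < m) {a b c a' b' c' : ℤ} :
    phaseDiag m a b c = phaseDiag m a' b' c' ↔
      a ≡ a' [ZMOD m] ∧ b ≡ b' [ZMOD m] ∧ 2 * c ≡ 2 * c' [ZMOD m] := by
  simp only [phaseDiag, diagonal_eq_diagonal_iff, Fin.forall_fin_succ, IsEmpty.forall_iff]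
  simp only [Fin.isValue, cons_val_zero, Fin.succ_zero_eq_one, cons_val_one,
    omega_zpow_eq_zpow_iff hm, Fin.succ_one_eq_two, cons_val, Fin.reduceSucc, and_true, true_and]
  constructor
  · rintro ⟨hb, ha, h⟩
    exact ⟨ha, hb, (ha.add hb).add_left_cancel h⟩
  · rintro ⟨ha, hb, h⟩
    exact ⟨hb, ha, (ha.add hb).add h⟩

lemma phaseDiag_zero : phaseDiag m 0 0 0 = 1 := by
  rw [phaseDiag, ← diagonal_one]
  congr 1
  ext i
  fin_cases i <;> simp

lemma phaseDiag_mul_phaseDiag (a b c a' b' c' : ℤ) :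
    phaseDiag m a b c * phaseDiag m a' b' c' = phaseDiag m (a + a') (b + b') (c + c') := by
  rw [phaseDiag, phaseDiag, phaseDiag, diagonal_mul_diagonal]
  congr 1
  ext i
  fin_cases i <;> simp [← zpow_add₀ (omega_ne_zero m)]
  ring_nf

end phaseDiag

section gates

variable {m : ℕ}

lemma kron_apply (A B : Matrix (Fin 2) (Fin 2) ℂ) (i j : Fin 4) :
    kron A B i j = A ((@finProdFinEquiv 2 2).symm i).1 ((@finProdFinEquiv 2 2).symm j).1 *
      B ((@finProdFinEquiv 2 2).symm i).2 ((@finProdFinEquiv 2 2).symm j).2 := rfl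

lemma X0_eq_permMatrix : X0 = (swap (0 : Fin 4) 2 * swap 1 3).permMatrix ℂ := by
  ext i j
  fin_cases i <;> fin_cases j <;>
    simp [X0, kron_apply, Xg, finProdFinEquiv, Fin.divNat, Fin.modNat, one_apply,
      PEquiv.toMatrix_apply, swap_apply_def]

lemma X1_eq_permMatrix : X1 = (swap (0 : Fin 4) 1 * swap 2 3).permMatrix ℂ := by
  ext i j
  fin_cases i <;> fin_cases j <;>
    simp [X1, kron_apply, Xg, finProdFinEquiv, Fin.divNat, Fin.modNat, one_apply,
      PEquiv.toMatrix_apply, swap_apply_def]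

lemma CX01_eq_permMatrix : CX01 = (swap (2 : Fin 4) 3).permMatrix ℂ := by
  ext i j
  fin_cases i <;> fin_cases j <;> simp [CX01, PEquiv.toMatrix_apply, swap_apply_def]

lemma CX10_eq_permMatrix : CX10 = (swap (1 : Fin 4) 3).permMatrix ℂ := by
  ext i j
  fin_cases i <;> fin_cases j <;> simp [CX10, PEquiv.toMatrix_apply, swap_apply_def]

lemma T0_eq_phaseDiag : T0 m = phaseDiag m 1 0 0 := by
  ext i j
  fin_cases i <;> fin_cases j <;>
    simp [T0, kron_apply, Tg, finProdFinEquiv, Fin.divNat, Fin.modNat, one_apply, phaseDiag]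

lemma T1_eq_phaseDiag : T1 m = phaseDiag m 0 1 0 := by
  ext i j
  fin_cases i <;> fin_cases j <;>
    simp [T1, kron_apply, Tg, finProdFinEquiv, Fin.divNat, Fin.modNat, one_apply, phaseDiag]

lemma X0_mul_X0 : X0 * X0 = 1 := by
  rw [X0_eq_permMatrix, ← permMatrix_mul, ← permMatrix_one]
  congr 1
  decide

lemma X1_mul_X1 : X1 * X1 = 1 := by
  rw [X1_eq_permMatrix, ← permMatrix_mul, ← permMatrix_one]
  congr 1
  decide

lemma commute_X0_X1 : Commute X0 X1 := by
  rw [Commute, SemiconjBy, X0_eq_permMatrix, X1_eq_permMatrix, ← permMatrix_mul, ← permMatrix_mul]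
  congr 1
  decide

lemma semiconjBy_CX01_X0 : SemiconjBy CX01 X0 (X0 * X1) := by
  rw [SemiconjBy]
  simp only [X0_eq_permMatrix, X1_eq_permMatrix, CX01_eq_permMatrix, ← permMatrix_mul]
  congr 1
  decide

lemma commute_CX01_X1 : Commute CX01 X1 := by
  rw [Commute, SemiconjBy]
  simp only [X1_eq_permMatrix, CX01_eq_permMatrix, ← permMatrix_mul]
  congr 1
  decide

lemma commute_CX10_X0 : Commute CX10 X0 := by
  rw [Commute, SemiconjBy]
  simp only [X0_eq_permMatrix, CX10_eq_permMatrix, ← permMatrix_mul]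
  congr 1
  decide

lemma semiconjBy_CX10_X1 : SemiconjBy CX10 X1 (X0 * X1) := by
  rw [SemiconjBy]
  simp only [X0_eq_permMatrix, X1_eq_permMatrix, CX10_eq_permMatrix, ← permMatrix_mul]
  congr 1
  decide

lemma CX01_mul_CX10_mul_CX01 : CX01 * CX10 * CX01 = (swap (1 : Fin 4) 2).permMatrix ℂ := by
  simp only [CX01_eq_permMatrix, CX10_eq_permMatrix, ← permMatrix_mul]
  congr 1
  decide

lemma CX01_mul_phaseDiag (a b c : ℤ) :
    CX01 * phaseDiag m a b c = phaseDiag m (a + b + 2 * c) b (-b - c) * CX01 := by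
  ext i j
  rw [phaseDiag, phaseDiag, mul_diagonal, diagonal_mul]
  fin_cases i <;> fin_cases j <;> simp [CX01]
  ring_nf

lemma CX10_mul_phaseDiag (a b c : ℤ) :
    CX10 * phaseDiag m a b c = phaseDiag m a (a + b + 2 * c) (-a - c) * CX10 := by
  ext i j
  rw [phaseDiag, phaseDiag, mul_diagonal, diagonal_mul]
  fin_cases i <;> fin_cases j <;> simp [CX10]
  ring_nf

lemma phaseDiag_mul_X0 (a b c : ℤ) :
    phaseDiag m a b c * X0 = omega m ^ a • (X0 * phaseDiag m (-a) (b + 2 * c) (-c)) := by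
  rw [X0_eq_permMatrix, phaseDiag, diagonal_mul_permMatrix, phaseDiag, ← Matrix.mul_smul,
    ← diagonal_smul]
  congr 2
  ext i
  fin_cases i <;> simp [Perm.mul_def, swap_apply_def, ← zpow_add₀ (omega_ne_zero m),
    mul_inv_cancel₀ (zpow_ne_zero _ (omega_ne_zero m))]
  all_goals ring_nf

lemma phaseDiag_mul_X1 (a b c : ℤ) :
    phaseDiag m a b c * X1 = omega m ^ b • (X1 * phaseDiag m (a + 2 * c) (-b) (-c)) := by
  rw [X1_eq_permMatrix, phaseDiag, diagonal_mul_permMatrix, phaseDiag, ← Matrix.mul_smul,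
    ← diagonal_smul]
  congr 2
  ext i
  fin_cases i <;> simp [Perm.mul_def, swap_apply_def, ← zpow_add₀ (omega_ne_zero m),
    mul_inv_cancel₀ (zpow_ne_zero _ (omega_ne_zero m))]
  all_goals ring_nf

end gates

section normalForm

variable {m : ℕ}

lemma T0_pow (l : ℕ) : T0 m ^ l = phaseDiag m l 0 0 := by
  induction l with
  | zero => simp [phaseDiag_zero]
  | succ l ih => rw [pow_succ, ih, T0_eq_phaseDiag, phaseDiag_mul_phaseDiag]; simp

lemma T1_pow (l : ℕ) : T1 m ^ l = phaseDiag m 0 l 0 := by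
  induction l with
  | zero => simp [phaseDiag_zero]
  | succ l ih => rw [pow_succ, ih, T1_eq_phaseDiag, phaseDiag_mul_phaseDiag]; simp

lemma CX01_mul_xLayer (k k' : ℕ) :
    CX01 * (X0 ^ k * X1 ^ k') = X0 ^ k * X1 ^ (k + k') * CX01 := by
  rw [← mul_assoc, (semiconjBy_CX01_X0.pow_right k).eq, commute_X0_X1.mul_pow, mul_assoc,
    (commute_CX01_X1.pow_right k').eq, pow_add]
  simp only [mul_assoc]

lemma CX10_mul_xLayer (k k' : ℕ) :
    CX10 * (X0 ^ k * X1 ^ k') = X0 ^ (k + k') * X1 ^ k' * CX10 := by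
  rw [← mul_assoc, (commute_CX10_X0.pow_right k).eq, mul_assoc,
    (semiconjBy_CX10_X1.pow_right k').eq, commute_X0_X1.mul_pow, pow_add]
  simp only [mul_assoc]

lemma exists_phaseDiag_mul_pow {X : Matrix (Fin 4) (Fin 4) ℂ}
    (hX : ∀ a b c : ℤ, ∃ a' b' c' : ℤ, PhaseEq (phaseDiag m a b c * X) (X * phaseDiag m a' b' c'))
    (a b c : ℤ) (k : ℕ) :
    ∃ a' b' c' : ℤ, PhaseEq (phaseDiag m a b c * X ^ k) (X ^ k * phaseDiag m a' b' c') := by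
  induction k with
  | zero => exact ⟨a, b, c, .of_eq (by simp)⟩
  | succ k ih =>
    obtain ⟨a₁, b₁, c₁, h₁⟩ := ih
    obtain ⟨a₂, b₂, c₂, h₂⟩ := hX a₁ b₁ c₁
    refine ⟨a₂, b₂, c₂, ?_⟩
    rw [pow_succ, ← mul_assoc, mul_assoc (X ^ k)]
    exact (h₁.mul_right X).trans (by rw [mul_assoc]; exact h₂.mul_left _)

lemma exists_phaseDiag_mul_xLayer (a b c : ℤ) (k k' : ℕ) :
    ∃ a' b' c' : ℤ,
      PhaseEq (phaseDiag m a b c * (X0 ^ k * X1 ^ k'))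
        (X0 ^ k * X1 ^ k' * phaseDiag m a' b' c') := by
  have hX0 (a b c : ℤ) :
      ∃ a' b' c' : ℤ, PhaseEq (phaseDiag m a b c * X0) (X0 * phaseDiag m a' b' c') :=
    ⟨_, _, _, by rw [phaseDiag_mul_X0]; exact .smul_left (zpow_ne_zero _ (omega_ne_zero m)) _⟩
  have hX1 (a b c : ℤ) :
      ∃ a' b' c' : ℤ, PhaseEq (phaseDiag m a b c * X1) (X1 * phaseDiag m a' b' c') :=
    ⟨_, _, _, by rw [phaseDiag_mul_X1]; exact .smul_left (zpow_ne_zero _ (omega_ne_zero m)) _⟩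
  obtain ⟨a₁, b₁, c₁, h₁⟩ := exists_phaseDiag_mul_pow hX0 a b c k
  obtain ⟨a₂, b₂, c₂, h₂⟩ := exists_phaseDiag_mul_pow hX1 a₁ b₁ c₁ k'
  refine ⟨a₂, b₂, c₂, ?_⟩
  rw [← mul_assoc]
  exact (h₁.mul_right _).trans (by rw [mul_assoc, mul_assoc]; exact h₂.mul_left _)

end normalForm

def HasNormalForm (m : ℕ) (s : ℤˣ) (U : Matrix (Fin 4) (Fin 4) ℂ) : Prop :=
  ∃ (k k' : ℕ) (a b c : ℤ) (σ : Perm (Fin 4)), σ 0 = 0 ∧ Perm.sign σ = s ∧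
    PhaseEq U (X0 ^ k * X1 ^ k' * phaseDiag m a b c * σ.permMatrix ℂ)

namespace HasNormalForm

variable {m : ℕ} {s : ℤˣ} {U : Matrix (Fin 4) (Fin 4) ℂ}

lemma one : HasNormalForm m 1 1 :=
  ⟨0, 0, 0, 0, 0, 1, rfl, Perm.sign_one, .of_eq (by simp [phaseDiag_zero])⟩

lemma X0_mul (h : HasNormalForm m s U) : HasNormalForm m s (X0 * U) := by
  obtain ⟨k, k', a, b, c, σ, hσ, hs, hU⟩ := h
  refine ⟨k + 1, k', a, b, c, σ, hσ, hs, (hU.mul_left X0).trans (.of_eq ?_)⟩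
  simp only [pow_succ', mul_assoc]

lemma X1_mul (h : HasNormalForm m s U) : HasNormalForm m s (X1 * U) := by
  obtain ⟨k, k', a, b, c, σ, hσ, hs, hU⟩ := h
  refine ⟨k, k' + 1, a, b, c, σ, hσ, hs, (hU.mul_left X1).trans (.of_eq ?_)⟩
  simp only [pow_succ', ← mul_assoc, ((commute_X0_X1.pow_left k).eq)]

lemma phaseDiag_mul (a₀ b₀ c₀ : ℤ) (h : HasNormalForm m s U) :
    HasNormalForm m s (phaseDiag m a₀ b₀ c₀ * U) := by
  obtain ⟨k, k', a, b, c, σ, hσ, hs, hU⟩ := h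
  obtain ⟨a', b', c', hD⟩ := exists_phaseDiag_mul_xLayer (m := m) a₀ b₀ c₀ k k'
  refine ⟨k, k', a' + a, b' + b, c' + c, σ, hσ, hs, (hU.mul_left _).trans ?_⟩
  convert hD.mul_right (phaseDiag m a b c * σ.permMatrix ℂ) using 1
  · simp only [mul_assoc]
  · simp only [← phaseDiag_mul_phaseDiag, mul_assoc]

lemma CX01_mul (h : HasNormalForm m s U) : HasNormalForm m (-s) (CX01 * U) := by
  obtain ⟨k, k', a, b, c, σ, hσ, hs, hU⟩ := h
  refine ⟨k, k + k', a + b + 2 * c, b, -b - c, σ * swap 2 3,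
    by simpa [swap_apply_of_ne_of_ne] using hσ,
    by rw [Perm.sign_mul, Perm.sign_swap (by decide), hs, mul_neg_one],
    (hU.mul_left CX01).trans (.of_eq ?_)⟩
  rw [permMatrix_mul, ← CX01_eq_permMatrix]
  simp only [← mul_assoc]
  rw [mul_assoc CX01, CX01_mul_xLayer, mul_assoc _ CX01, CX01_mul_phaseDiag]
  simp only [mul_assoc]

lemma CX10_mul (h : HasNormalForm m s U) : HasNormalForm m (-s) (CX10 * U) := by
  obtain ⟨k, k', a, b, c, σ, hσ, hs, hU⟩ := h
  refine ⟨k + k', k', a, a + b + 2 * c, -a - c, σ * swap 1 3,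
    by simpa [swap_apply_of_ne_of_ne] using hσ,
    by rw [Perm.sign_mul, Perm.sign_swap (by decide), hs, mul_neg_one],
    (hU.mul_left CX10).trans (.of_eq ?_)⟩
  rw [permMatrix_mul, ← CX10_eq_permMatrix]
  simp only [← mul_assoc]
  rw [mul_assoc CX10, CX10_mul_xLayer, mul_assoc _ CX10, CX10_mul_phaseDiag]
  simp only [mul_assoc]

lemma gate_mul (g : Gate2X) (h : HasNormalForm m s U) :
    HasNormalForm m (if g.isCX then -s else s) (g.toMatrix m * U) := by
  cases g with
  | X0 => exact h.X0_mul
  | X1 => exact h.X1_mul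
  | T0pow l => simpa [Gate2X.toMatrix, Gate2X.isCX, T0_pow] using h.phaseDiag_mul l 0 0
  | T1pow l => simpa [Gate2X.toMatrix, Gate2X.isCX, T1_pow] using h.phaseDiag_mul 0 l 0
  | CX01 => exact h.CX01_mul
  | CX10 => exact h.CX10_mul

end HasNormalForm

lemma hasNormalForm_circuit (m : ℕ) (L : List Gate2X) :
    HasNormalForm m ((-1) ^ L.countP (·.isCX)) (L.map (Gate2X.toMatrix m)).prod := by
  induction L with
  | nil => simpa using HasNormalForm.one
  | cons g L ih =>
    rw [List.map_cons, List.prod_cons, List.countP_cons]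
    convert ih.gate_mul g using 1
    split_ifs <;> simp [pow_succ]

lemma eq_swap_of_apply_zero_of_sign_eq_neg_one {σ : Perm (Fin 4)} (h₀ : σ 0 = 0)
    (hσ : Perm.sign σ = -1) : σ = swap 2 3 ∨ σ = swap 1 3 ∨ σ = swap 1 2 := by
  revert σ
  decide

/-- `U` is the matrix of a circuit with at most `n` CX gates. -/
def IsCircuit (m n : ℕ) (U : Matrix (Fin 4) (Fin 4) ℂ) : Prop :=
  ∃ L : List Gate2X, L.countP (·.isCX) ≤ n ∧ (L.map (Gate2X.toMatrix m)).prod = U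

namespace IsCircuit

variable {m n n' : ℕ} {U V : Matrix (Fin 4) (Fin 4) ℂ}

lemma gate (g : Gate2X) : IsCircuit m (if g.isCX then 1 else 0) (g.toMatrix m) :=
  ⟨[g], by cases g <;> simp [Gate2X.isCX], by simp⟩

lemma mul (hU : IsCircuit m n U) (hV : IsCircuit m n' V) : IsCircuit m (n + n') (U * V) := by
  obtain ⟨L, hL, rfl⟩ := hU
  obtain ⟨L', hL', rfl⟩ := hV
  exact ⟨L ++ L', by rw [List.countP_append]; omega, by simp⟩

lemma pow (h : IsCircuit m 0 U) (k : ℕ) : IsCircuit m 0 (U ^ k) := by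
  induction k with
  | zero => exact ⟨[], by simp, by simp⟩
  | succ k ih => rw [pow_succ]; exact ih.mul h

end IsCircuit

section oneCX

variable {m : ℕ}

lemma isCircuit_xLayer (k k' : ℕ) : IsCircuit m 0 (X0 ^ k * X1 ^ k') :=
  ((IsCircuit.gate .X0).pow k).mul ((IsCircuit.gate .X1).pow k')

lemma isCircuit_phaseDiag (hm : 0 < m) (a b : ℤ) : IsCircuit m 0 (phaseDiag m a b 0) := by
  obtain ⟨r, -, hr⟩ := Int.exists_natCast_lt_modEq hm a
  obtain ⟨r', -, hr'⟩ := Int.exists_natCast_lt_modEq hm b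
  have h : IsCircuit m 0 (T0 m ^ r * T1 m ^ r') :=
    (IsCircuit.gate (.T0pow r)).mul (IsCircuit.gate (.T1pow r'))
  convert h using 1
  rw [T0_pow, T1_pow, phaseDiag_mul_phaseDiag, phaseDiag_eq_phaseDiag_iff hm]
  simpa using ⟨hr.symm, hr'.symm⟩

lemma phaseDiag_mul_CX01 (a b c : ℤ) :
    phaseDiag m a b c * CX01 = phaseDiag m (a + c) (b + c) 0 * CX01 * phaseDiag m 0 (-c) 0 := by
  rw [mul_assoc, CX01_mul_phaseDiag, ← mul_assoc, phaseDiag_mul_phaseDiag]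
  congr 2 <;> ring

lemma phaseDiag_mul_CX10 (a b c : ℤ) :
    phaseDiag m a b c * CX10 = phaseDiag m (a + c) (b + c) 0 * CX10 * phaseDiag m (-c) 0 0 := by
  rw [mul_assoc, CX10_mul_phaseDiag, ← mul_assoc, phaseDiag_mul_phaseDiag]
  congr 2 <;> ring

lemma isCircuit_xLayer_mul_phaseDiag_mul_CX01 (hm : 0 < m) (k k' : ℕ) (a b c : ℤ) :
    IsCircuit m 1 (X0 ^ k * X1 ^ k' * phaseDiag m a b c * CX01) := by
  rw [mul_assoc _ (phaseDiag m a b c), phaseDiag_mul_CX01, ← mul_assoc, ← mul_assoc]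
  exact (((isCircuit_xLayer k k').mul (isCircuit_phaseDiag hm _ _)).mul (.gate .CX01)).mul
    (isCircuit_phaseDiag hm _ _)

lemma isCircuit_xLayer_mul_phaseDiag_mul_CX10 (hm : 0 < m) (k k' : ℕ) (a b c : ℤ) :
    IsCircuit m 1 (X0 ^ k * X1 ^ k' * phaseDiag m a b c * CX10) := by
  rw [mul_assoc _ (phaseDiag m a b c), phaseDiag_mul_CX10, ← mul_assoc, ← mul_assoc]
  exact (((isCircuit_xLayer k k').mul (isCircuit_phaseDiag hm _ _)).mul (.gate .CX10)).mul
    (isCircuit_phaseDiag hm _ _)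

end oneCX

def tripleCXForm (m k k' l l' l'' : ℕ) : Matrix (Fin 4) (Fin 4) ℂ :=
  X0 ^ k * X1 ^ k' * T0 m ^ l * T1 m ^ l' * CX01 * CX10 * T1 m ^ l'' * CX01

section tripleCXForm

variable {m : ℕ}

lemma tripleCXForm_eq (k k' l l' l'' : ℕ) :
    tripleCXForm m k k' l l' l'' =
      X0 ^ k * X1 ^ k' * phaseDiag m (l + l'') (l' + l'') (-l'') *
        (swap (1 : Fin 4) 2).permMatrix ℂ := by
  have hCX : CX01 * CX10 * phaseDiag m 0 l'' 0 * CX01 =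
      phaseDiag m l'' l'' (-l'') * (swap (1 : Fin 4) 2).permMatrix ℂ := by
    rw [mul_assoc CX01, CX10_mul_phaseDiag, ← mul_assoc, CX01_mul_phaseDiag,
      ← CX01_mul_CX10_mul_CX01]
    simp [mul_assoc]
  calc tripleCXForm m k k' l l' l''
      = X0 ^ k * X1 ^ k' * (phaseDiag m l 0 0 * phaseDiag m 0 l' 0) *
          (CX01 * CX10 * phaseDiag m 0 l'' 0 * CX01) := by
        simp only [tripleCXForm, T0_pow, T1_pow, mul_assoc]
    _ = X0 ^ k * X1 ^ k' * (phaseDiag m l 0 0 * phaseDiag m 0 l' 0 * phaseDiag m l'' l'' (-l'')) *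
          (swap (1 : Fin 4) 2).permMatrix ℂ := by
        rw [hCX]
        simp only [mul_assoc]
    _ = _ := by
        rw [phaseDiag_mul_phaseDiag, phaseDiag_mul_phaseDiag]
        simp

lemma exists_tripleCXForm_eq (hm : 0 < m) (k k' : ℕ) (a b c : ℤ) :
    ∃ j j' l l' l'' : ℕ, j < 2 ∧ j' < 2 ∧ l < m ∧ l' < m ∧ l'' < m / Nat.gcd m 2 ∧
      X0 ^ k * X1 ^ k' * phaseDiag m a b c * (swap (1 : Fin 4) 2).permMatrix ℂ =
        tripleCXForm m j j' l l' l'' := by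
  obtain ⟨l'', hl'', hc⟩ := Int.exists_natCast_lt_modEq
    (Nat.div_pos (Nat.le_of_dvd hm (Nat.gcd_dvd_left m 2)) (Nat.gcd_pos_of_pos_left 2 hm)) (-c)
  obtain ⟨l, hl, ha⟩ := Int.exists_natCast_lt_modEq hm (a - l'')
  obtain ⟨l', hl', hb⟩ := Int.exists_natCast_lt_modEq hm (b - l'')
  refine ⟨k % 2, k' % 2, l, l', l'', Nat.mod_lt _ two_pos, Nat.mod_lt _ two_pos, hl, hl', hl'', ?_⟩
  rw [tripleCXForm_eq, ← pow_eq_pow_mod k (by rw [sq, X0_mul_X0]),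
    ← pow_eq_pow_mod k' (by rw [sq, X1_mul_X1])]
  congr 2
  rw [phaseDiag_eq_phaseDiag_iff hm]
  refine ⟨by simpa using (ha.add_right (l'' : ℤ)).symm,
    by simpa using (hb.add_right (l'' : ℤ)).symm, (Int.mul_modEq_mul_iff_modEq_div_gcd hm).2 ?_⟩
  simpa using (Int.neg_modEq_neg.2 hc).symm

lemma xLayer_apply_zero {k k' : ℕ} (hk : k < 2) (hk' : k' < 2) (i : Fin 4) :
    (X0 ^ k * X1 ^ k') i 0 = if (i : ℕ) = 2 * k + k' then 1 else 0 := by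
  interval_cases k <;> interval_cases k' <;> fin_cases i <;>
    simp [X0_eq_permMatrix, X1_eq_permMatrix, mul_apply, Fin.sum_univ_four, PEquiv.toMatrix_apply,
      swap_apply_def]

lemma mul_phaseDiag_mul_permMatrix_apply_zero (A : Matrix (Fin 4) (Fin 4) ℂ) (a b c : ℤ)
    {σ : Perm (Fin 4)} (hσ : σ 0 = 0) (i : Fin 4) :
    (A * phaseDiag m a b c * σ.permMatrix ℂ) i 0 = A i 0 := by
  have hcol (j : Fin 4) : σ j = 0 ↔ j = 0 := by
    conv_lhs => rw [← hσ]
    exact σ.injective.eq_iff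
  simp [mul_apply, PEquiv.toMatrix_apply, hcol, phaseDiag, diagonal]

lemma isUnit_xLayer (k k' : ℕ) : IsUnit (X0 ^ k * X1 ^ k') :=
  ((Units.mk X0 X0 X0_mul_X0 X0_mul_X0).isUnit.pow k).mul
    ((Units.mk X1 X1 X1_mul_X1 X1_mul_X1).isUnit.pow k')

lemma eq_of_phaseEq_tripleCXForm (hm : 0 < m) {k k' l l' l'' j j' n n' n'' : ℕ}
    (hk : k < 2) (hk' : k' < 2) (hl : l < m) (hl' : l' < m) (hl'' : l'' < m / Nat.gcd m 2)
    (hj : j < 2) (hj' : j' < 2) (hn : n < m) (hn' : n' < m) (hn'' : n'' < m / Nat.gcd m 2)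
    (h : PhaseEq (tripleCXForm m k k' l l' l'') (tripleCXForm m j j' n n' n'')) :
    k = j ∧ k' = j' ∧ l = n ∧ l' = n' ∧ l'' = n'' := by
  obtain ⟨z, -, h⟩ := h
  rw [tripleCXForm_eq, tripleCXForm_eq] at h
  -- Column 0 of both sides is a basis vector: this pins down `k`, `k'` and the phase.
  have hcol := congrFun (congrFun h ⟨2 * k + k', by omega⟩) 0
  simp only [Matrix.smul_apply, smul_eq_mul, xLayer_apply_zero hk hk', xLayer_apply_zero hj hj',
    mul_phaseDiag_mul_permMatrix_apply_zero _ _ _ _ (by decide : swap (1 : Fin 4) 2 0 = 0)] at hcol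
  have hkj : 2 * k + k' = 2 * j + j' := by
    by_contra hne
    simp [hne] at hcol
  obtain ⟨rfl, rfl⟩ : k = j ∧ k' = j' := by omega
  obtain rfl : z = 1 := by simpa using hcol.symm
  rw [one_smul] at h
  obtain ⟨ha, hb, hc⟩ := (phaseDiag_eq_phaseDiag_iff hm).1
    ((isUnit_xLayer k k').mul_left_cancel ((isUnit_permMatrix _).mul_right_cancel h))
  have hn''_eq : l'' = n'' := by
    refine Nat.ModEq.eq_of_lt_of_lt (Int.natCast_modEq_iff.1 ?_) hl'' hn''
    exact Int.neg_modEq_neg.1 ((Int.mul_modEq_mul_iff_modEq_div_gcd hm).1 hc)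
  subst hn''_eq
  exact ⟨rfl, rfl,
    Nat.ModEq.eq_of_lt_of_lt (Int.natCast_modEq_iff.1 (ha.add_right_cancel' _)) hl hn,
    Nat.ModEq.eq_of_lt_of_lt (Int.natCast_modEq_iff.1 (hb.add_right_cancel' _)) hl' hn', rfl⟩

end tripleCXForm

lemma card_quot_tripleCXForms {m : ℕ} (hm : 0 < m) :
    Nat.card (Quot (fun U V : TripleCXForms m => PhaseEq U.1 V.1)) = 4 * m ^ 3 / Nat.gcd m 2 := by
  let f (p : Fin 2 × Fin 2 × Fin m × Fin m × Fin (m / Nat.gcd m 2)) :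
      Quot (fun U V : TripleCXForms m => PhaseEq U.1 V.1) :=
    Quot.mk _ ⟨tripleCXForm m p.1 p.2.1 p.2.2.1 p.2.2.2.1 p.2.2.2.2,
      p.1, p.2.1, p.2.2.1, p.2.2.2.1, p.2.2.2.2, p.1.2, p.2.1.2, p.2.2.1.2, p.2.2.2.1.2,
      p.2.2.2.2.2, rfl⟩
  have hf : Function.Bijective f := by
    refine ⟨?_, ?_⟩
    · rintro ⟨k, k', l, l', l''⟩ ⟨j, j', n, n', n''⟩ hkj
      have h := (PhaseEq.equivalence.comap Subtype.val).eqvGen_iff.1 (Quot.eqvGen_exact hkj)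
      obtain ⟨h₁, h₂, h₃, h₄, h₅⟩ := eq_of_phaseEq_tripleCXForm hm k.2 k'.2 l.2 l'.2 l''.2
        j.2 j'.2 n.2 n'.2 n''.2 h
      simp only [Prod.mk.injEq, Fin.ext_iff]
      exact ⟨h₁, h₂, h₃, h₄, h₅⟩
    · rintro ⟨_, k, k', l, l', l'', hk, hk', hl, hl', hl'', rfl⟩
      exact ⟨(⟨k, hk⟩, ⟨k', hk'⟩, ⟨l, hl⟩, ⟨l', hl'⟩, ⟨l'', hl''⟩), rfl⟩
  rw [← Nat.card_eq_of_bijective f hf]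
  simp only [Nat.card_eq_fintype_card, Fintype.card_prod, Fintype.card_fin]
  rw [show 4 * m ^ 3 = 4 * m * m * m by ring, Nat.mul_div_assoc _ (Nat.gcd_dvd_left m 2)]
  ring

theorem three_CX_canonical_form (m : ℕ) (hm : 0 < m) :
    (∀ U ∈ F2set m 3,
      (∃ k k' l l' l'' : ℕ, k < 2 ∧ k' < 2 ∧ l < m ∧ l' < m ∧ l'' < m / Nat.gcd m 2 ∧
        PhaseEq U (X0 ^ k * X1 ^ k' * T0 m ^ l * T1 m ^ l' * CX01 * CX10 * T1 m ^ l'' * CX01)) ∨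
      (∃ L' : List Gate2X, L'.countP (fun g => g.isCX) ≤ 1 ∧
        PhaseEq U ((L'.map (Gate2X.toMatrix m)).prod))) ∧
    Nat.card (Quot (fun (U V : TripleCXForms m) => PhaseEq U.1 V.1)) =
      4 * m ^ 3 / Nat.gcd m 2 := by
  refine ⟨fun U ⟨L, hLU, hL⟩ => ?_, card_quot_tripleCXForms hm⟩
  obtain ⟨k, k', a, b, c, σ, hσ₀, hσ, hU⟩ := hasNormalForm_circuit m L
  rw [hLU] at hU
  rw [hL] at hσ
  rcases eq_swap_of_apply_zero_of_sign_eq_neg_one hσ₀ (hσ.trans (by decide)) with rfl | rfl | rfl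
  · obtain ⟨L', hL', hL'U⟩ := isCircuit_xLayer_mul_phaseDiag_mul_CX01 hm k k' a b c
    rw [← CX01_eq_permMatrix, ← hL'U] at hU
    exact .inr ⟨L', hL', hU⟩
  · obtain ⟨L', hL', hL'U⟩ := isCircuit_xLayer_mul_phaseDiag_mul_CX10 hm k k' a b c
    rw [← CX10_eq_permMatrix, ← hL'U] at hU
    exact .inr ⟨L', hL', hU⟩
  · obtain ⟨j, j', l, l', l'', hj, hj', hl, hl', hl'', he⟩ := exists_tripleCXForm_eq hm k k' a b c
    rw [he] at hU
    exact .inl ⟨j, j', l, l', l'', hj, hj', hl, hl', hl'', hU⟩
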